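/- Reversing the orientation of a virtual knot transforms the odd writhe polynomial by f_{K*}(t) = t² · f_K(t⁻¹). Equivalently, at the level of a signed oriented chord diagram: reversing the circle orientation (keeping chord orientations and signs determined by the crossing data) sends each exponent N(c) = i − j to j − i + 2, preserving signs and oddness of chords. -/

import Mathlib

open Finset LaurentPolynomial

/-- A signed, oriented chord diagram (combinatorial Gauss diagram) with `n` chords:
the `2*n` chord endpoints on the circle are the elements of `Fin (2*n)` in (positive)
cyclic order; chord `i` has over endpoint `c⁺ = ep (i, true)`, under endpoint
`c⁻ = ep (i, false)` and a sign (writhe) `sign i ∈ {1, -1}`. -/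
structure ChordDiagram (n : ℕ) where
  ep : Fin n × Bool ≃ Fin (2 * n)
  sign : Fin n → ℤ
  sign_unit : ∀ i, sign i = 1 ∨ sign i = -1

namespace ChordDiagram

variable {n : ℕ}

/-- the over endpoint `c⁺` of a chord -/
def over' (D : ChordDiagram n) (i : Fin n) : Fin (2 * n) := D.ep (i, true)

/-- the under endpoint `c⁻` of a chord -/
def under (D : ChordDiagram n) (i : Fin n) : Fin (2 * n) := D.ep (i, false)

/-- the number of steps from `b` to `x`, travelling in the positive direction
around the circle -/
def relpos (b x : Fin (2 * n)) : ℕ := (x.val + 2 * n - b.val) % (2 * n)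

/-- `x` lies strictly between the endpoints of chord `i`, on the side swept out
going from `c⁺` to `c⁻` in the positive direction -/
def StrictlyBetween (D : ChordDiagram n) (i : Fin n) (x : Fin (2 * n)) : Prop :=
  0 < relpos (D.over' i) x ∧ relpos (D.over' i) x < relpos (D.over' i) (D.under i)

instance (D : ChordDiagram n) (i : Fin n) (x : Fin (2 * n)) :
    Decidable (D.StrictlyBetween i x) := inferInstanceAs (Decidable (_ ∧ _))

/-- two distinct chords interlink if their endpoints alternate around the circle,
i.e. exactly one endpoint of `j` lies strictly between the endpoints of `i` -/
def Interlinks (D : ChordDiagram n) (i j : Fin n) : Prop :=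
  i ≠ j ∧ Xor' (D.StrictlyBetween i (D.over' j)) (D.StrictlyBetween i (D.under j))

instance (D : ChordDiagram n) (i j : Fin n) : Decidable (D.Interlinks i j) :=
  inferInstanceAs (Decidable (_ ∧ ((_ ∧ ¬_) ∨ (_ ∧ ¬_))))

/-- the number of chords interlinking chord `i` -/
def interlinkCount (D : ChordDiagram n) (i : Fin n) : ℕ :=
  (univ.filter fun j => D.Interlinks i j).card

/-- the number of chord endpoints lying (strictly) on one side of chord `i` -/
def sideCount (D : ChordDiagram n) (i : Fin n) : ℕ :=
  (univ.filter fun x => D.StrictlyBetween i x).card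

/-- a chord is odd if it interlinks an odd number of other chords -/
def OddChord (D : ChordDiagram n) (i : Fin n) : Prop := Odd (D.interlinkCount i)

instance (D : ChordDiagram n) (i : Fin n) : Decidable (D.OddChord i) :=
  inferInstanceAs (Decidable (Odd _))

/-- The label `N(a)` of the arc whose terminal point is `a`: the sum of the signs of
all chords whose over endpoint is met strictly before their under endpoint when
traversing the circle once in the positive direction starting inside this arc. -/
def arcLabel (D : ChordDiagram n) (a : Fin (2 * n)) : ℤ :=
  ∑ i ∈ univ.filter fun i => relpos a (D.over' i) < relpos a (D.under i), D.sign i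

/-- The value `N(c)` of a chord: for a positive chord, the difference `x - y` of the
arc labels just before `c⁺` and just before `c⁻`; for a negative chord, the difference
`z - w` of the arc labels just after `c⁺` and just after `c⁻` (the label just after an
over endpoint is the label just before it minus the sign, and the label just after an
under endpoint is the label just before it plus the sign). -/
def chordVal (D : ChordDiagram n) (i : Fin n) : ℤ :=
  if D.sign i = 1 then D.arcLabel (D.over' i) - D.arcLabel (D.under i)
  else (D.arcLabel (D.over' i) - D.sign i) - (D.arcLabel (D.under i) + D.sign i)

/-- the odd writhe `J(K) = Σ_{c odd} w(c)` -/
def oddWrithe (D : ChordDiagram n) : ℤ :=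
  ∑ i ∈ univ.filter fun i => D.OddChord i, D.sign i

/-- the odd writhe polynomial `f_K(t) = Σ_{c odd} w(c) · t^{N(c)} ∈ ℤ[t,t⁻¹]` -/
noncomputable def owp (D : ChordDiagram n) : LaurentPolynomial ℤ :=
  ∑ i ∈ univ.filter fun i => D.OddChord i, C (D.sign i) * T (D.chordVal i)

/-- evaluation of the odd writhe polynomial at a rational number `x`:
`Σ_{c odd} w(c) · x^{N(c)}` -/
def owpEval (D : ChordDiagram n) (x : ℚ) : ℚ :=
  ∑ i ∈ univ.filter fun i => D.OddChord i, (D.sign i : ℚ) * x ^ D.chordVal i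

/-- the coefficient of `t^k` in a Laurent polynomial -/
def coeffOf (f : LaurentPolynomial ℤ) (k : ℤ) : ℤ := (AddMonoidAlgebra.coeff f : ℤ →₀ ℤ) k

/-- the degree `Deg f = max { |i| : coefficient of tⁱ in f is nonzero }` -/
def owpDeg (f : LaurentPolynomial ℤ) : ℕ := (AddMonoidAlgebra.coeff f : ℤ →₀ ℤ).support.sup fun k => k.natAbs

/-- reversing the orientation of the knot: the cyclic order of the endpoints is
reversed, while signs and over/under data of the crossings are preserved -/
def reverse (D : ChordDiagram n) : ChordDiagram n where
  ep := D.ep.trans Fin.revPerm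
  sign := D.sign
  sign_unit := D.sign_unit

/-- the mirror image: every crossing is switched, so every chord's over and under
endpoints are exchanged and its sign is negated -/
def mirror (D : ChordDiagram n) : ChordDiagram n where
  ep := (Equiv.prodCongr (Equiv.refl (Fin n))
      ⟨fun b => !b, fun b => !b, Bool.not_not, Bool.not_not⟩).trans D.ep
  sign := fun i => -D.sign i
  sign_unit := fun i => (D.sign_unit i).elim
    (fun h => Or.inr (show -D.sign i = -1 by rw [h]))
    (fun h => Or.inl (show -D.sign i = 1 by rw [h]; ring))

/-! ### Planarity via the Euler characteristic of the carrier surface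

The diagram determines a 4-valent graph (vertices = chords, edges = the `2*n` arcs of
the circle) together with a rotation system at each vertex, coming from the structure
of a transversal crossing: for a positive crossing the counterclockwise order of the
four ends is (over-out, under-out, over-in, under-in), for a negative crossing it is
(over-out, under-in, over-in, under-out).  The diagram is realizable by a classical
(planar) knot diagram iff the resulting closed oriented carrier surface is a sphere,
i.e. iff `V - E + F = n - 2n + F = 2`.

Darts are encoded as pairs `(p, io) : Fin (2*n) × Bool`, meaning the end of an arc
at the vertex through the circle point `p`, with `io = true` for the outgoing arc
(from `p` to `p+1`) and `io = false` for the incoming arc (from `p-1` to `p`). -/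

/-- the other endpoint of the chord through a given endpoint -/
def otherEnd (D : ChordDiagram n) (p : Fin (2 * n)) : Fin (2 * n) :=
  D.ep ((D.ep.symm p).1, !(D.ep.symm p).2)

lemma otherEnd_otherEnd (D : ChordDiagram n) (p : Fin (2 * n)) :
    D.otherEnd (D.otherEnd p) = p := by
  simp [otherEnd]

/-- whether the rotation at the vertex toggles the in/out marker when passing from
the end at `p` to the end at the other endpoint of its chord -/
def tog (D : ChordDiagram n) (p : Fin (2 * n)) : Bool :=
  if D.sign (D.ep.symm p).1 = 1 then !(D.ep.symm p).2 else (D.ep.symm p).2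

/-- the vertex rotation permutation on darts -/
def vertexPerm (D : ChordDiagram n) : Equiv.Perm (Fin (2 * n) × Bool) :=
  Equiv.trans
    ⟨fun x => (x.1, xor x.2 (D.tog x.1)), fun x => (x.1, xor x.2 (D.tog x.1)),
      fun x => by simp [Bool.xor_assoc], fun x => by simp [Bool.xor_assoc]⟩
    ⟨fun x => (D.otherEnd x.1, x.2), fun x => (D.otherEnd x.1, x.2),
      fun x => by simp [otherEnd_otherEnd], fun x => by simp [otherEnd_otherEnd]⟩

/-- the edge involution on darts, matching the two ends of each arc -/
def arcPerm (D : ChordDiagram n) : Equiv.Perm (Fin (2 * n) × Bool) :=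
  ⟨fun x => if x.2 then (finRotate (2 * n) x.1, false) else ((finRotate (2 * n)).symm x.1, true),
   fun x => if x.2 then (finRotate (2 * n) x.1, false) else ((finRotate (2 * n)).symm x.1, true),
   fun x => by rcases x with ⟨p, _ | _⟩ <;> simp [-finRotate_apply, -finRotate_symm_apply],
   fun x => by rcases x with ⟨p, _ | _⟩ <;> simp [-finRotate_apply, -finRotate_symm_apply]⟩

/-- the face permutation on darts -/
def facePerm (D : ChordDiagram n) : Equiv.Perm (Fin (2 * n) × Bool) :=
  (D.arcPerm).trans D.vertexPerm

/-- the number of faces: the number of orbits of the face permutation -/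
noncomputable def faceCount (D : ChordDiagram n) : ℕ :=
  Nat.card (MulAction.orbitRel.Quotient (Subgroup.zpowers D.facePerm) (Fin (2 * n) × Bool))

/-- the chord diagram arises from a classical (planar) knot diagram: the carrier
surface has Euler characteristic `V - E + F = n - 2n + faceCount = 2` -/
def PlanarRealizable (D : ChordDiagram n) : Prop := D.faceCount = n + 2

end ChordDiagram

/-! Reversing the circle replaces the positive distance `relpos a x` from `a` to `x` by
`relpos x a = 2n - relpos a x`. For a point off a chord this swaps the two sides of the chord,
so interlinking, and with it the parity of a chord, is unchanged. For the arc label at an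
endpoint `a` of chord `c` it swaps, for every chord other than `c`, whether its over or its
under endpoint is met first; hence the new label is the total writhe minus the old one,
corrected by `± w(c)` for `c` itself (`+` at `c⁺`, `-` at `c⁻`). Subtracting the labels at the
two endpoints gives `N*(c) = 2 - N(c)`. -/

namespace ChordDiagram

variable {n : ℕ}

lemma relpos_eq (b x : Fin (2 * n)) :
    relpos b x = if b.val ≤ x.val then x.val - b.val else x.val + 2 * n - b.val := by
  unfold relpos
  split
  · rw [Nat.mod_eq_sub_mod (by omega), show x.val + 2 * n - b.val - 2 * n = x.val - b.val by omega,
      Nat.mod_eq_of_lt (by omega)]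
  · exact Nat.mod_eq_of_lt (by omega)

lemma relpos_eq_zero_iff {b x : Fin (2 * n)} : relpos b x = 0 ↔ x = b := by
  rw [relpos_eq, Fin.ext_iff]; split <;> omega

@[simp]
lemma relpos_self (b : Fin (2 * n)) : relpos b b = 0 := relpos_eq_zero_iff.2 rfl

lemma relpos_inj {b x y : Fin (2 * n)} : relpos b x = relpos b y ↔ x = y := by
  rw [relpos_eq, relpos_eq, Fin.ext_iff]; split <;> split <;> omega

lemma relpos_add_relpos {b x : Fin (2 * n)} (h : x ≠ b) : relpos b x + relpos x b = 2 * n := by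
  have : x.val ≠ b.val := Fin.val_ne_of_ne h
  rw [relpos_eq, relpos_eq]; split <;> split <;> omega

lemma relpos_lt (b x : Fin (2 * n)) : relpos b x < 2 * n := by
  rw [relpos_eq]; split <;> omega

@[simp]
lemma relpos_rev (b x : Fin (2 * n)) : relpos b.rev x.rev = relpos x b := by
  unfold relpos
  simp only [Fin.val_rev]
  congr 1
  omega

@[simp]
lemma reverse_sign (D : ChordDiagram n) : D.reverse.sign = D.sign := rfl

@[simp]
lemma reverse_over' (D : ChordDiagram n) (i : Fin n) : D.reverse.over' i = (D.over' i).rev := rfl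

@[simp]
lemma reverse_under (D : ChordDiagram n) (i : Fin n) : D.reverse.under i = (D.under i).rev := rfl

lemma over'_ne_under (D : ChordDiagram n) (i : Fin n) : D.over' i ≠ D.under i :=
  D.ep.injective.ne (by simp)

lemma ep_ne_ep (D : ChordDiagram n) {i j : Fin n} (h : j ≠ i) (b c : Bool) :
    D.ep (j, b) ≠ D.ep (i, c) :=
  D.ep.injective.ne (by simp [h])

lemma strictlyBetween_reverse_rev (D : ChordDiagram n) {i : Fin n} {x : Fin (2 * n)}
    (hxo : x ≠ D.over' i) (hxu : x ≠ D.under i) :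
    D.reverse.StrictlyBetween i x.rev ↔ ¬ D.StrictlyBetween i x := by
  have hou := D.over'_ne_under i
  have := relpos_add_relpos hxo
  have := relpos_add_relpos hou.symm
  have := relpos_lt (D.over' i) x
  have := (relpos_eq_zero_iff.not).2 hxo
  have := (relpos_inj (b := D.over' i)).not.2 hxu
  simp only [StrictlyBetween, reverse_over', reverse_under, relpos_rev]
  omega

lemma interlinks_reverse (D : ChordDiagram n) (i j : Fin n) :
    D.reverse.Interlinks i j ↔ D.Interlinks i j := by
  unfold Interlinks
  rcases eq_or_ne i j with rfl | hij
  · simp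
  have hji := hij.symm
  rw [reverse_over', reverse_under,
    D.strictlyBetween_reverse_rev (x := D.over' j) (D.ep_ne_ep hji true true)
      (D.ep_ne_ep hji true false),
    D.strictlyBetween_reverse_rev (x := D.under j) (D.ep_ne_ep hji false true)
      (D.ep_ne_ep hji false false)]
  exact and_congr_right fun _ => xor_not_not

lemma oddChord_reverse (D : ChordDiagram n) (i : Fin n) :
    D.reverse.OddChord i ↔ D.OddChord i := by
  simp only [OddChord, interlinkCount, interlinks_reverse]

lemma arcLabel_reverse_rev (D : ChordDiagram n) (a : Fin (2 * n)) :
    D.reverse.arcLabel a.rev =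
      ∑ j ∈ univ.filter fun j => relpos (D.over' j) a < relpos (D.under j) a, D.sign j := by
  simp only [arcLabel, reverse_over', reverse_under, relpos_rev, reverse_sign]

lemma arcLabel_summand_reverse_add (D : ChordDiagram n) (i j : Fin n) (b : Bool) :
    ((if relpos (D.over' j) (D.ep (i, b)) < relpos (D.under j) (D.ep (i, b)) then D.sign j
        else 0) +
      if relpos (D.ep (i, b)) (D.over' j) < relpos (D.ep (i, b)) (D.under j) then D.sign j
        else 0) =
      D.sign j + if j = i then (if b then D.sign j else -D.sign j) else 0 := by
  rcases eq_or_ne j i with rfl | hji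
  · cases b <;> simp [over', under, relpos_eq_zero_iff, Nat.pos_iff_ne_zero]
  · have := relpos_add_relpos (x := D.over' j) (D.ep_ne_ep hji true b)
    have := relpos_add_relpos (x := D.under j) (D.ep_ne_ep hji false b)
    have := (relpos_inj (b := D.ep (i, b))).not.2 (D.over'_ne_under j)
    simp only [hji, if_false, add_zero]
    split_ifs <;> omega

lemma arcLabel_reverse_ep (D : ChordDiagram n) (i : Fin n) (b : Bool) :
    D.reverse.arcLabel (D.ep (i, b)).rev =
      ∑ j, D.sign j - D.arcLabel (D.ep (i, b)) + if b then D.sign i else -D.sign i := by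
  have hsum := Finset.sum_congr rfl fun j (_ : j ∈ univ) => D.arcLabel_summand_reverse_add i j b
  rw [sum_add_distrib, sum_add_distrib, sum_ite_eq', if_pos (mem_univ i), ← sum_filter,
    ← sum_filter, ← arcLabel_reverse_rev] at hsum
  change _ + D.arcLabel (D.ep (i, b)) = _ at hsum
  linarith

lemma chordVal_reverse (D : ChordDiagram n) (i : Fin n) :
    D.reverse.chordVal i = 2 - D.chordVal i := by
  have hover : D.reverse.arcLabel (D.reverse.over' i) =
      ∑ j, D.sign j - D.arcLabel (D.over' i) + D.sign i :=
    D.arcLabel_reverse_ep i true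
  have hunder : D.reverse.arcLabel (D.reverse.under i) =
      ∑ j, D.sign j - D.arcLabel (D.under i) - D.sign i :=
    (D.arcLabel_reverse_ep i false).trans (sub_eq_add_neg _ _).symm
  simp only [chordVal, reverse_sign, hover, hunder]
  rcases D.sign_unit i with h | h <;> simp only [h] <;> norm_num <;> ring

lemma owp_reverse (D : ChordDiagram n) : D.reverse.owp = T 2 * invert D.owp := by
  simp only [owp, oddChord_reverse, chordVal_reverse, reverse_sign, map_sum, mul_sum, map_mul,
    invert_C, invert_T, sub_eq_add_neg, T_add]
  exact sum_congr rfl fun i _ => by ring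

end ChordDiagram

open ChordDiagram

/-- reversing the orientation transforms the odd writhe polynomial by
`f_{K*}(t) = t² · f_K(t⁻¹)`; each exponent `N(c)` becomes `2 - N(c)` while signs and
oddness of chords are preserved. -/
theorem stmt_9 {n : ℕ} (D : ChordDiagram n) :
    D.reverse.owp = T 2 * LaurentPolynomial.invert D.owp ∧
    ∀ i : Fin n, D.reverse.sign i = D.sign i ∧ (D.reverse.OddChord i ↔ D.OddChord i) ∧
      D.reverse.chordVal i = 2 - D.chordVal i :=
  ⟨D.owp_reverse, fun i => ⟨rfl, D.oddChord_reverse i, D.chordVal_reverse i⟩⟩
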